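/- Let X ⊆ ℝ^d be a finite set partitioned into nonempty parts P₁,…,P_k, let C ⊆ ℝ^d be a finite nonempty set with cost(X,C) > 0, and let ℓ be a real with 0 < ℓ ≤ k. For x ∈ X set λ(x) := ℓ·cost(x,C)/cost(X,C), and sample a random subset S ⊆ X by including each x ∈ X independently with probability 1 − e^{−λ(x)}. Then the expected uncovered cost after this round satisfies Σ_{S⊆X} (∏_{x∈S}(1−e^{−λ(x)}))·(∏_{x∈X∖S} e^{−λ(x)}) · Σ_{i : P_i ∩ (C∪S) = ∅} cost(P_i, C∪S) ≤ e^{−ℓ/k} · cost(X,C). -/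

import Mathlib

open Finset
open scoped Classical

/-- `ptCost x C` is `cost(x, C) = min_{c ∈ C} ‖x - c‖²`. -/
noncomputable def ptCost {d : ℕ} (x : EuclideanSpace ℝ (Fin d))
    (C : Finset (EuclideanSpace ℝ (Fin d))) : ℝ :=
  sInf ((fun c => ‖x - c‖ ^ 2) '' (C : Set (EuclideanSpace ℝ (Fin d))))

/-- `setCost Y C` is `cost(Y, C) = Σ_{x ∈ Y} cost(x, C)`. -/
noncomputable def setCost {d : ℕ} (Y C : Finset (EuclideanSpace ℝ (Fin d))) : ℝ :=
  ∑ x ∈ Y, ptCost x C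

/-!
A part `P i` left uncovered by `C ∪ S` is in particular missed by `S`, and adding centers only
lowers its cost, so the expected uncovered cost is at most
`∑ i, Pr[P i ∩ S = ∅] · t i = ∑ i, t i · e^{-ℓ t i / T}`, where `t i = cost(P i, C)` and
`T = ∑ i, t i = cost(X, C)`. Bounding `u e^{-u}` by its tangent line at `u = ℓ / k`, which lies
above the graph on `u ≥ 0` because `ℓ / k ≤ 1`, and summing over the `k` parts, the linear terms
add up to exactly `e^{-ℓ/k} T`.
-/

lemma ptCost_nonneg {d : ℕ} (x : EuclideanSpace ℝ (Fin d))
    (C : Finset (EuclideanSpace ℝ (Fin d))) : 0 ≤ ptCost x C :=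
  Real.sInf_nonneg <| by rintro _ ⟨c, -, rfl⟩; positivity

lemma ptCost_le_of_subset {d : ℕ} (x : EuclideanSpace ℝ (Fin d))
    {C D : Finset (EuclideanSpace ℝ (Fin d))} (hC : C.Nonempty) (hCD : C ⊆ D) :
    ptCost x D ≤ ptCost x C :=
  csInf_le_csInf ⟨0, by rintro _ ⟨c, -, rfl⟩; positivity⟩ (hC.to_set.image _)
    (Set.image_mono (by exact_mod_cast hCD))

lemma setCost_nonneg {d : ℕ} (Y C : Finset (EuclideanSpace ℝ (Fin d))) : 0 ≤ setCost Y C :=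
  sum_nonneg fun x _ => ptCost_nonneg x C

lemma setCost_le_of_subset {d : ℕ} (Y : Finset (EuclideanSpace ℝ (Fin d)))
    {C D : Finset (EuclideanSpace ℝ (Fin d))} (hC : C.Nonempty) (hCD : C ⊆ D) :
    setCost Y D ≤ setCost Y C :=
  sum_le_sum fun x _ => ptCost_le_of_subset x hC hCD

lemma setCost_biUnion {d : ℕ} {ι : Type*} [Fintype ι]
    {P : ι → Finset (EuclideanSpace ℝ (Fin d))} (hdisj : ∀ i j, i ≠ j → Disjoint (P i) (P j))
    (C : Finset (EuclideanSpace ℝ (Fin d))) :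
    setCost (univ.biUnion P) C = ∑ i, setCost (P i) C :=
  sum_biUnion fun i _ j _ hij => hdisj i j hij

lemma prod_exp_neg_mul_ptCost_div {d : ℕ} (Y C : Finset (EuclideanSpace ℝ (Fin d))) (ℓ T : ℝ) :
    ∏ x ∈ Y, Real.exp (-(ℓ * ptCost x C / T)) = Real.exp (-(ℓ * setCost Y C / T)) := by
  rw [← Real.exp_sum, sum_neg_distrib, ← sum_div, ← mul_sum, setCost]

lemma sum_uncovered_setCost_le {d : ℕ} {ι : Type*} [Fintype ι]
    (P : ι → Finset (EuclideanSpace ℝ (Fin d))) {C : Finset (EuclideanSpace ℝ (Fin d))}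
    (hC : C.Nonempty) (S : Finset (EuclideanSpace ℝ (Fin d))) :
    ∑ i with P i ∩ (C ∪ S) = ∅, setCost (P i) (C ∪ S) ≤
      ∑ i with P i ∩ S = ∅, setCost (P i) C := by
  calc ∑ i with P i ∩ (C ∪ S) = ∅, setCost (P i) (C ∪ S)
      ≤ ∑ i with P i ∩ (C ∪ S) = ∅, setCost (P i) C :=
        sum_le_sum fun i _ => setCost_le_of_subset _ hC subset_union_left
    _ ≤ ∑ i with P i ∩ S = ∅, setCost (P i) C := by
        refine sum_le_sum_of_subset_of_nonneg (fun i => ?_) fun i _ _ => setCost_nonneg _ _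
        simp only [mem_filter, mem_univ, true_and, inter_union_distrib_left, union_eq_empty]
        exact And.right

/-- The right-hand side is the tangent line of `u ↦ u e^{-u}` at `u = r`. It lies above the graph
because `e^{u - r} ≥ 1 + (u - r)` and `(1 + (u - r)) ((1 - r) u + r²) - u = (1 - r) (u - r)²`. -/
lemma mul_exp_neg_le_tangent {r u : ℝ} (hr : r ≤ 1) (hu : 0 ≤ u) :
    u * Real.exp (-u) ≤ Real.exp (-r) * ((1 - r) * u + r ^ 2) := by
  have htangent : 0 ≤ (1 - r) * u + r ^ 2 := by nlinarith
  have hexp : u ≤ Real.exp (u - r) * ((1 - r) * u + r ^ 2) := by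
    nlinarith [Real.add_one_le_exp (u - r), mul_nonneg (sub_nonneg.2 hr) (sq_nonneg (u - r))]
  calc u * Real.exp (-u) ≤ Real.exp (u - r) * ((1 - r) * u + r ^ 2) * Real.exp (-u) :=
        mul_le_mul_of_nonneg_right hexp (Real.exp_nonneg _)
    _ = Real.exp (-r) * ((1 - r) * u + r ^ 2) := by
        rw [mul_right_comm, ← Real.exp_add]; ring_nf

lemma sum_mul_exp_neg_le {ι : Type*} [Fintype ι] (t : ι → ℝ) (ht : ∀ i, 0 ≤ t i)
    (hT : 0 < ∑ i, t i) {ℓ : ℝ} (hℓ : 0 < ℓ) (hℓι : ℓ ≤ Fintype.card ι) :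
    ∑ i, t i * Real.exp (-(ℓ * t i / ∑ j, t j)) ≤
      Real.exp (-ℓ / Fintype.card ι) * ∑ i, t i := by
  set T := ∑ j, t j
  set n : ℝ := (Fintype.card ι : ℝ)
  have hn : 0 < n := hℓ.trans_le hℓι
  have hr : ℓ / n ≤ 1 := (div_le_one hn).2 hℓι
  have hterm : ∀ i, ℓ * (t i * Real.exp (-(ℓ * t i / T))) ≤
      T * (Real.exp (-(ℓ / n)) * ((1 - ℓ / n) * (ℓ * t i / T) + (ℓ / n) ^ 2)) := by
    intro i
    have := mul_le_mul_of_nonneg_left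
      (mul_exp_neg_le_tangent hr (div_nonneg (mul_nonneg hℓ.le (ht i)) hT.le)) hT.le
    rwa [← mul_assoc T, mul_div_cancel₀ _ hT.ne', mul_assoc] at this
  suffices ℓ * ∑ i, t i * Real.exp (-(ℓ * t i / T)) ≤ ℓ * (Real.exp (-ℓ / n) * T) from
    le_of_mul_le_mul_left this hℓ
  calc ℓ * ∑ i, t i * Real.exp (-(ℓ * t i / T))
      ≤ ∑ i, T * (Real.exp (-(ℓ / n)) * ((1 - ℓ / n) * (ℓ * t i / T) + (ℓ / n) ^ 2)) := by
        rw [mul_sum]; exact sum_le_sum fun i _ => hterm i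
    _ = ℓ * (Real.exp (-ℓ / n) * T) := by
        simp only [← mul_sum, sum_add_distrib, ← sum_div, sum_const, card_univ, nsmul_eq_mul]
        rw [neg_div]
        field_simp
        ring

lemma sum_powerset_filter_inter_eq_empty {α : Type*} [DecidableEq α] {X A : Finset α}
    (hAX : A ⊆ X) {p q : α → ℝ} (hpq : ∀ x ∈ X, p x + q x = 1) :
    ∑ S ∈ X.powerset with A ∩ S = ∅, (∏ x ∈ S, p x) * ∏ x ∈ X \ S, q x = ∏ x ∈ A, q x := by
  have hmasked : ∀ S : Finset α, ∏ x ∈ S, (if x ∈ A then 0 else p x) =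
      if A ∩ S = ∅ then ∏ x ∈ S, p x else 0 := by
    intro S
    split_ifs with hAS
    · refine prod_congr rfl fun x hx => if_neg fun hxA => ?_
      simpa [hAS] using mem_inter.2 ⟨hxA, hx⟩
    · obtain ⟨x, hx⟩ := nonempty_iff_ne_empty.2 hAS
      exact prod_eq_zero (mem_inter.1 hx).2 (if_pos (mem_inter.1 hx).1)
  have := prod_add (fun x => if x ∈ A then 0 else p x) q X
  simp only [hmasked, ite_mul, zero_mul, ← sum_filter] at this
  have hA : ∏ x ∈ A, q x = ∏ x ∈ X, if x ∈ A then q x else 1 := by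
    rw [prod_ite_mem, inter_eq_right.2 hAX]
  rw [← this, hA]
  refine prod_congr rfl fun x hx => ?_
  split_ifs <;> simp [hpq x hx]

lemma sum_powerset_mul_sum_filter_inter_eq_empty {α ι : Type*} [DecidableEq α] [Fintype ι]
    {X : Finset α} {A : ι → Finset α} (hAX : ∀ i, A i ⊆ X) {p q : α → ℝ}
    (hpq : ∀ x ∈ X, p x + q x = 1) (t : ι → ℝ) :
    ∑ S ∈ X.powerset, ((∏ x ∈ S, p x) * ∏ x ∈ X \ S, q x) * ∑ i with A i ∩ S = ∅, t i =
      ∑ i, (∏ x ∈ A i, q x) * t i := by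
  simp only [mul_sum, sum_filter, mul_ite, mul_zero]
  rw [sum_comm]
  refine sum_congr rfl fun i _ => ?_
  rw [← sum_filter, ← sum_mul, sum_powerset_filter_inter_eq_empty (hAX i) hpq]

theorem expected_uncovered_cost_one_round_general {d k : ℕ}
    (X C : Finset (EuclideanSpace ℝ (Fin d)))
    (P : Fin k → Finset (EuclideanSpace ℝ (Fin d)))
    (hdisj : ∀ i j, i ≠ j → Disjoint (P i) (P j))
    (hcover : X = Finset.univ.biUnion P)
    (hC : C.Nonempty) (hcost : 0 < setCost X C)
    (ℓ : ℝ) (hℓ : 0 < ℓ) (hℓk : ℓ ≤ (k : ℝ)) :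
    ∑ S ∈ X.powerset,
        ((∏ x ∈ S, (1 - Real.exp (-(ℓ * ptCost x C / setCost X C)))) *
            ∏ x ∈ X \ S, Real.exp (-(ℓ * ptCost x C / setCost X C))) *
          ∑ i ∈ Finset.univ.filter (fun i : Fin k => P i ∩ (C ∪ S) = ∅),
            setCost (P i) (C ∪ S) ≤
      Real.exp (-ℓ / (k : ℝ)) * setCost X C := by
  have hT : setCost X C = ∑ i, setCost (P i) C := hcover ▸ setCost_biUnion hdisj C
  set T := setCost X C
  have hexcl : ∀ x, Real.exp (-(ℓ * ptCost x C / T)) ≤ 1 := fun x =>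
    Real.exp_le_one_iff.2 <| neg_nonpos.2 <| by have := ptCost_nonneg x C; positivity
  have hweight : ∀ S : Finset (EuclideanSpace ℝ (Fin d)), 0 ≤
      (∏ x ∈ S, (1 - Real.exp (-(ℓ * ptCost x C / T)))) *
        ∏ x ∈ X \ S, Real.exp (-(ℓ * ptCost x C / T)) := fun S =>
    mul_nonneg (prod_nonneg fun x _ => sub_nonneg.2 (hexcl x))
      (prod_nonneg fun x _ => (Real.exp_pos _).le)
  have hPX : ∀ i, P i ⊆ X := fun i => hcover ▸ subset_biUnion_of_mem P (mem_univ i)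
  calc _ ≤ ∑ S ∈ X.powerset, ((∏ x ∈ S, (1 - Real.exp (-(ℓ * ptCost x C / T)))) *
          ∏ x ∈ X \ S, Real.exp (-(ℓ * ptCost x C / T))) *
          ∑ i with P i ∩ S = ∅, setCost (P i) C :=
        sum_le_sum fun S _ =>
          mul_le_mul_of_nonneg_left (sum_uncovered_setCost_le P hC S) (hweight S)
    _ = ∑ i, setCost (P i) C * Real.exp (-(ℓ * setCost (P i) C / T)) := by
        rw [sum_powerset_mul_sum_filter_inter_eq_empty hPX (fun x _ => sub_add_cancel _ _)]
        simp only [prod_exp_neg_mul_ptCost_div, mul_comm]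
    _ ≤ Real.exp (-ℓ / k) * T := by
        have := sum_mul_exp_neg_le _ (fun i => setCost_nonneg _ _) (hT ▸ hcost) hℓ
          (by rwa [Fintype.card_fin])
        rwa [Fintype.card_fin, ← hT] at this

/-- One round of `k`-means∥_Pois seeding with oversampling parameter `0 < ℓ ≤ k`:
if each `x ∈ X` is independently added with probability `1 − e^{−λ(x)}` where
`λ(x) = ℓ·cost(x,C)/cost(X,C)`, then the expected cost of the clusters left uncovered by
`C ∪ S` is at most `e^{−ℓ/k}·cost(X,C)`. -/
theorem expected_uncovered_cost_one_round {d k : ℕ}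
    (X C : Finset (EuclideanSpace ℝ (Fin d)))
    (P : Fin k → Finset (EuclideanSpace ℝ (Fin d)))
    (hPne : ∀ i, (P i).Nonempty)
    (hdisj : ∀ i j, i ≠ j → Disjoint (P i) (P j))
    (hcover : X = Finset.univ.biUnion P)
    (hC : C.Nonempty) (hcost : 0 < setCost X C)
    (ℓ : ℝ) (hℓ : 0 < ℓ) (hℓk : ℓ ≤ (k : ℝ)) :
    ∑ S ∈ X.powerset,
        ((∏ x ∈ S, (1 - Real.exp (-(ℓ * ptCost x C / setCost X C)))) *
            ∏ x ∈ X \ S, Real.exp (-(ℓ * ptCost x C / setCost X C))) *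
          ∑ i ∈ Finset.univ.filter (fun i : Fin k => P i ∩ (C ∪ S) = ∅),
            setCost (P i) (C ∪ S) ≤
      Real.exp (-ℓ / (k : ℝ)) * setCost X C :=
  expected_uncovered_cost_one_round_general X C P hdisj hcover hC hcost ℓ hℓ hℓk
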